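/- Fix m, β > 0 and λ₀, λ₁ ∈ ℝ, and set λ̃ = λ₀ + λ₁. For θ ∈ ℝ define, using the principal branch Log of the complex logarithm, f(θ) = Log(1 − e^{−mβ cosh θ − 2πiλ₀}) − Log(1 − e^{−mβ cosh θ + 2πiλ₀}) − Log(1 − e^{−mβ cosh θ − 2πiλ̃}) + Log(1 − e^{−mβ cosh θ + 2πiλ̃}) and g(θ) = Log(1 − e^{−mβ cosh θ + 2πiλ₀}) + Log(1 − e^{−mβ cosh θ − 2πiλ₀}) − Log(1 − e^{−mβ cosh θ + 2πiλ̃}) − Log(1 − e^{−mβ cosh θ − 2πiλ̃}). Suppose ν, η : ℂ → ℂ satisfy, for all real θ, ν(θ + iπ/2) − ν(θ − iπ/2) = −i f(θ) and η(θ + iπ/2) + η(θ − iπ/2) = g(θ). Define G(θ) = −exp(πiλ₁ − λ₁θ + (i/2)ν(θ) + (1/2)η(θ)) and H(θ) = exp(−λ₁θ + (i/2)ν(θ) − (1/2)η(θ)). Then for every real θ: G(θ + iπ/2)/H(θ − iπ/2) = −(1 − e^{−mβ cosh θ − 2πiλ₀})/(1 − e^{−mβ cosh θ − 2πiλ̃})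 and G(θ − iπ/2)/H(θ + iπ/2) = −e^{2πiλ₁}(1 − e^{−mβ cosh θ + 2πiλ₀})/(1 − e^{−mβ cosh θ + 2πiλ̃}). -/

import Mathlib

open Complex

/-- `E m β lam θ = 1 − exp(−mβ cosh θ − 2πi·lam)`; note
`1 − exp(−mβ cosh θ + 2πi·lam) = E m β (−lam) θ`. -/
noncomputable def Efac (m β lam : ℝ) (θ : ℝ) : ℂ :=
  1 - Complex.exp (-(m * β * Real.cosh θ : ℝ) - 2 * (Real.pi : ℂ) * Complex.I * (lam : ℂ))

/-- The function `f` of the paper (branch of logarithms: principal `Log`). -/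
noncomputable def fLog (m β lam₀ lamt : ℝ) (θ : ℝ) : ℂ :=
  Complex.log (Efac m β lam₀ θ) - Complex.log (Efac m β (-lam₀) θ)
    - Complex.log (Efac m β lamt θ) + Complex.log (Efac m β (-lamt) θ)

/-- The function `g` of the paper (branch of logarithms: principal `Log`). -/
noncomputable def gLog (m β lam₀ lamt : ℝ) (θ : ℝ) : ℂ :=
  Complex.log (Efac m β (-lam₀) θ) + Complex.log (Efac m β lam₀ θ)
    - Complex.log (Efac m β (-lamt) θ) - Complex.log (Efac m β lamt θ)

/-! Up to the sign built into `G`, the quotient `G(θ ± iπ/2) / H(θ ∓ iπ/2)` is the exponential of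
`πiλ₁ ∓ iπλ₁ ± (i/2)(ν(θ + iπ/2) − ν(θ − iπ/2)) + (1/2)(η(θ + iπ/2) + η(θ − iπ/2))`, which the jump
relations turn into `(f + g)/2` resp. `2πiλ₁ + (g − f)/2`. In `f + g` the logarithms of the factors
with `+2πiλ` cancel, in `g − f` those with `−2πiλ`; since `|e^{−mβ cosh θ ∓ 2πiλ}| < 1`, no factor
vanishes and the remaining logarithms exponentiate back to the factors. -/

lemma one_sub_exp_ne_zero_of_re_ne_zero {z : ℂ} (hz : z.re ≠ 0) : 1 - exp z ≠ 0 := by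
  intro h
  have hnorm := congrArg norm (sub_eq_zero.mp h).symm
  rw [norm_exp, norm_one, Real.exp_eq_one_iff] at hnorm
  exact hz hnorm

lemma Efac_ne_zero {m β : ℝ} (hm : 0 < m) (hβ : 0 < β) (lam θ : ℝ) : Efac m β lam θ ≠ 0 := by
  refine one_sub_exp_ne_zero_of_re_ne_zero ?_
  have : 0 < m * β * Real.cosh θ := by positivity
  simp only [sub_re, neg_re, ofReal_re, mul_re, mul_im, I_re, I_im, ofReal_im, re_ofNat, im_ofNat]
  linarith

lemma fLog_add_gLog (m β lam₀ lamt θ : ℝ) :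
    fLog m β lam₀ lamt θ + gLog m β lam₀ lamt θ
      = 2 * (log (Efac m β lam₀ θ) - log (Efac m β lamt θ)) := by
  unfold fLog gLog
  ring

lemma gLog_sub_fLog (m β lam₀ lamt θ : ℝ) :
    gLog m β lam₀ lamt θ - fLog m β lam₀ lamt θ
      = 2 * (log (Efac m β (-lam₀) θ) - log (Efac m β (-lamt) θ)) := by
  unfold fLog gLog
  ring

/-- Given `ν, η` satisfying the jump relations
`ν(θ+iπ/2) − ν(θ−iπ/2) = −i f(θ)` and `η(θ+iπ/2) + η(θ−iπ/2) = g(θ)` for real `θ`, the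
functions `G(θ) = −exp(πiλ₁ − λ₁θ + (i/2)ν(θ) + (1/2)η(θ))` and
`H(θ) = exp(−λ₁θ + (i/2)ν(θ) − (1/2)η(θ))` satisfy the two functional relations
(2.15)–(2.16) of the paper. -/
theorem GH_functional_relations
    (m β lam₀ lam₁ : ℝ) (hm : 0 < m) (hβ : 0 < β)
    (ν η : ℂ → ℂ)
    (hν : ∀ θ : ℝ, ν ((θ : ℂ) + (Real.pi / 2 : ℝ) * Complex.I)
        - ν ((θ : ℂ) - (Real.pi / 2 : ℝ) * Complex.I)
        = -Complex.I * fLog m β lam₀ (lam₀ + lam₁) θ)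
    (hη : ∀ θ : ℝ, η ((θ : ℂ) + (Real.pi / 2 : ℝ) * Complex.I)
        + η ((θ : ℂ) - (Real.pi / 2 : ℝ) * Complex.I)
        = gLog m β lam₀ (lam₀ + lam₁) θ)
    (G H : ℂ → ℂ)
    (hG : ∀ θ : ℂ, G θ = -Complex.exp ((Real.pi : ℂ) * Complex.I * (lam₁ : ℂ)
        - (lam₁ : ℂ) * θ + (Complex.I / 2) * ν θ + (1 / 2 : ℂ) * η θ))
    (hH : ∀ θ : ℂ, H θ = Complex.exp (-(lam₁ : ℂ) * θ
        + (Complex.I / 2) * ν θ - (1 / 2 : ℂ) * η θ)) :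
    ∀ θ : ℝ,
      G ((θ : ℂ) + (Real.pi / 2 : ℝ) * Complex.I) / H ((θ : ℂ) - (Real.pi / 2 : ℝ) * Complex.I)
        = -(Efac m β lam₀ θ / Efac m β (lam₀ + lam₁) θ) ∧
      G ((θ : ℂ) - (Real.pi / 2 : ℝ) * Complex.I) / H ((θ : ℂ) + (Real.pi / 2 : ℝ) * Complex.I)
        = -Complex.exp (2 * (Real.pi : ℂ) * Complex.I * (lam₁ : ℂ)) *
            (Efac m β (-lam₀) θ / Efac m β (-(lam₀ + lam₁)) θ) := by
  intro θ
  have quotient (z w : ℂ) : G z / H w = -exp (Real.pi * I * lam₁ - lam₁ * (z - w)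
      + I / 2 * (ν z - ν w) + (η z + η w) / 2) := by
    rw [hG, hH, neg_div, ← exp_sub]
    ring_nf
  set zp : ℂ := θ + (Real.pi / 2 : ℝ) * I
  set zm : ℂ := θ - (Real.pi / 2 : ℝ) * I
  have hshift : zp - zm = Real.pi * I := by push_cast [zp, zm]; ring
  have hsum := fLog_add_gLog m β lam₀ (lam₀ + lam₁) θ
  have hdiff := gLog_sub_fLog m β lam₀ (lam₀ + lam₁) θ
  constructor
  · rw [quotient, show Real.pi * I * lam₁ - lam₁ * (zp - zm) + I / 2 * (ν zp - ν zm)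
        + (η zp + η zm) / 2 = log (Efac m β lam₀ θ) - log (Efac m β (lam₀ + lam₁) θ) by
          linear_combination -(lam₁ : ℂ) * hshift + I / 2 * hν θ + hη θ / 2 + hsum / 2
            - fLog m β lam₀ (lam₀ + lam₁) θ / 2 * I_mul_I,
      exp_sub, exp_log (Efac_ne_zero hm hβ _ θ), exp_log (Efac_ne_zero hm hβ _ θ)]
  · rw [quotient, show Real.pi * I * lam₁ - lam₁ * (zm - zp) + I / 2 * (ν zm - ν zp)
        + (η zm + η zp) / 2 = 2 * Real.pi * I * lam₁
          + (log (Efac m β (-lam₀) θ) - log (Efac m β (-(lam₀ + lam₁)) θ)) by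
          linear_combination (lam₁ : ℂ) * hshift - I / 2 * hν θ + hη θ / 2 + hdiff / 2
            + fLog m β lam₀ (lam₀ + lam₁) θ / 2 * I_mul_I,
      exp_add, exp_sub, exp_log (Efac_ne_zero hm hβ _ θ), exp_log (Efac_ne_zero hm hβ _ θ),
      neg_mul]
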